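/- arXiv:1406.2634 — 2 statements merged into one kernel-verified Lean document; each statement's English description precedes it below -/
import Mathlib

section
/- Setting Q(c) = √(1 + σ(1/2 − (3/2)c²)) and P(c) = 1 − σ(1/2 − 3c²) for c² ∈ [0,1] and σ ∈ (0, 2/7), the equation Q(c) = P(c) has exactly one solution c² ∈ [0,1], namely c² = 1/6 − (5/(12σ))(1 − √(1 + 4σ/25)). -/
open Real

/-!
For `c² ≥ 0` the right-hand side `P` is positive, so `Q = P` is equivalent to the squared
equation `Q² = P²`. In the reduced variable `w = 1 + (12σc² - 2σ)/5 = (4P + 1)/5` the squared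
equation becomes `w² = 1 + 4σ/25`, whose only positive root is `w = √(1 + 4σ/25)`; solving for
`c²` gives the critical inclination.
-/

namespace CriticalInclination

variable {σ x : ℝ}

lemma one_sub_mul_pos (hσ0 : 0 ≤ σ) (hσ2 : σ < 2) (hx : 0 ≤ x) :
    0 < 1 - σ * (1/2 - 3 * x) := by
  nlinarith [mul_nonneg hσ0 hx]

lemma mul_self_eq_iff_reduced (σ x : ℝ) :
    (1 - σ * (1/2 - 3 * x)) * (1 - σ * (1/2 - 3 * x)) = 1 + σ * (1/2 - (3/2) * x) ↔
      (1 + (12*σ*x - 2*σ) / 5) * (1 + (12*σ*x - 2*σ) / 5) = 1 + 4*σ/25 := by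
  constructor <;> intro h
  · linear_combination 16/25 * h
  · linear_combination 25/16 * h

lemma eq_critical_iff_reduced (hσ : σ ≠ 0) (s : ℝ) :
    x = 1/6 - (5/(12*σ)) * (1 - s) ↔ s = 1 + (12*σ*x - 2*σ) / 5 := by
  constructor <;> intro h
  · rw [h]; field_simp; ring
  · rw [h]; field_simp; ring

end CriticalInclination

theorem unique_critical_inclination (σ : ℝ) (hσ : σ ∈ Set.Ioo (0:ℝ) (2/7)) :
    ∀ x ∈ Set.Icc (0:ℝ) 1,
      (Real.sqrt (1 + σ * (1/2 - (3/2) * x)) = 1 - σ * (1/2 - 3 * x) ↔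
        x = 1/6 - (5/(12*σ)) * (1 - Real.sqrt (1 + 4*σ/25))) := by
  obtain ⟨hσ0, hσ2⟩ := hσ
  rintro x ⟨hx0, -⟩
  have hP := CriticalInclination.one_sub_mul_pos hσ0.le (by linarith) hx0
  have hw : 0 < 1 + (12*σ*x - 2*σ) / 5 := by linarith
  rw [sqrt_eq_iff_mul_self_eq_of_pos hP, CriticalInclination.eq_critical_iff_reduced hσ0.ne',
    sqrt_eq_iff_mul_self_eq_of_pos hw]
  exact CriticalInclination.mul_self_eq_iff_reduced σ x
end

section
/- For σ ∈ (0,1), the range of k(c²,σ) = √(1 + σ(1/2 − (3/2)c²))/(1 − σ(1/2 − 3c²)) over c² ∈ [0,1] is the closed interval [√(1−σ)/(1+(5/2)σ), √(1+σ/2)/(1−σ/2)]; in particular every k in this interval is attained by exactly one inclination. -/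
/-!
The numerator `√(1 + σ(1/2 - 3x/2))` is nonnegative and strictly decreasing in `x = c²`, while the
denominator `1 - σ(1/2 - 3x)` is positive and increasing, so `k` is strictly decreasing and
continuous on `[0, 1]`. By the intermediate value theorem its range is `[k(1), k(0)]`, and strict
monotonicity makes every value attained once.
-/

open Real Set

theorem StrictAntiOn.div_of_monotoneOn {α β : Type*} [Preorder α] [Field β] [LinearOrder β]
    [IsStrictOrderedRing β] {s : Set α} {f g : α → β} (hf : StrictAntiOn f s)
    (hf₀ : ∀ x ∈ s, 0 ≤ f x) (hg : MonotoneOn g s) (hg₀ : ∀ x ∈ s, 0 < g x) :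
    StrictAntiOn (fun x => f x / g x) s := fun x hx y hy hxy =>
  calc f y / g y < f x / g y := div_lt_div_of_pos_right (hf hx hy hxy) (hg₀ y hy)
    _ ≤ f x / g x := div_le_div_of_nonneg_left (hf₀ x hx) (hg₀ x hx) (hg hx hy hxy.le)

theorem StrictAntiOn.sqrt {α : Type*} [Preorder α] {s : Set α} {f : α → ℝ}
    (hf : StrictAntiOn f s) (hf₀ : ∀ x ∈ s, 0 ≤ f x) : StrictAntiOn (fun x => √(f x)) s :=
  fun _ hx y hy hxy => Real.sqrt_lt_sqrt (hf₀ y hy) (hf hx hy hxy)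

/-- The ratio `k(c², σ)` of Eq. (22), as a function of `x = c²`. -/
noncomputable def frequencyRatio (σ x : ℝ) : ℝ :=
  √(1 + σ * (1/2 - (3/2) * x)) / (1 - σ * (1/2 - 3 * x))

section

variable {σ : ℝ}

theorem frequencyRatio_strictAntiOn (hσ₀ : 0 < σ) (hσ₁ : σ ≤ 1) :
    StrictAntiOn (frequencyRatio σ) (Icc 0 1) := by
  refine StrictAntiOn.div_of_monotoneOn (StrictAntiOn.sqrt ?_ ?_) (fun x _ => Real.sqrt_nonneg _)
    ?_ ?_
  · intro x _ y _ hxy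
    nlinarith
  · rintro x ⟨-, hx₁⟩
    nlinarith
  · intro x _ y _ hxy
    nlinarith
  · rintro x ⟨hx₀, -⟩
    nlinarith

theorem frequencyRatio_continuousOn (hσ₀ : 0 ≤ σ) (hσ₁ : σ < 2) :
    ContinuousOn (frequencyRatio σ) (Icc 0 1) := by
  refine ContinuousOn.div (by fun_prop) (by fun_prop) ?_
  rintro x ⟨hx₀, -⟩
  nlinarith

theorem frequencyRatio_zero : frequencyRatio σ 0 = √(1 + σ / 2) / (1 - σ / 2) := by
  unfold frequencyRatio
  ring_nf

theorem frequencyRatio_one : frequencyRatio σ 1 = √(1 - σ) / (1 + (5/2) * σ) := by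
  unfold frequencyRatio
  ring_nf

end

theorem frequency_ratio_range (σ : ℝ) (hσ : σ ∈ Set.Ioo (0:ℝ) 1) :
    (fun x : ℝ => Real.sqrt (1 + σ * (1/2 - (3/2) * x)) / (1 - σ * (1/2 - 3 * x))) ''
        Set.Icc 0 1
      = Set.Icc (Real.sqrt (1 - σ) / (1 + (5/2)*σ)) (Real.sqrt (1 + σ/2) / (1 - σ/2)) ∧
    Set.InjOn
      (fun x : ℝ => Real.sqrt (1 + σ * (1/2 - (3/2) * x)) / (1 - σ * (1/2 - 3 * x)))
      (Set.Icc 0 1) := by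
  obtain ⟨hσ₀, hσ₁⟩ := hσ
  have hanti := frequencyRatio_strictAntiOn hσ₀ hσ₁.le
  refine ⟨?_, hanti.injOn⟩
  rw [← frequencyRatio_zero, ← frequencyRatio_one]
  exact (frequencyRatio_continuousOn hσ₀.le (by linarith)).image_Icc_of_antitoneOn zero_le_one
    hanti.antitoneOn
end
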